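/- Zeroth-order power balance (NESS): with the definitions P_ξ^(0) = -∫ (dω/2π) ω Im[𝔇̃(ω)]_{nn} [G̃_H(ω)]_{nn}, P_γ^(0) = -2γ Σ_k ∫ (dω/2π) ω² |[𝔇̃(ω)]_{nk}|² [G̃_H(ω)]_{kk}, and P_{ν→n}^(0,2) = -λ₂ Σ_k ∫ (dω/2π) ω Im{[𝔇̃(ω)]_{nk}[𝔇̃(ω)*]_{νk}} [G̃_H(ω)]_{kk}, assuming all integrals converge, one has P_ξ^(0) + P_γ^(0) + P_{ν→n}^(0,2) = 0 for n = 1, 2. -/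

import Mathlib

open MeasureTheory Real

/-- The matrix -ω² I + 2iγω I + Ω_R², where Ω_R² has diagonal ω_R² + λ₂ and
off-diagonal -λ₂ (λ₂ written `lam`). -/
noncomputable def invProp (γ ωR lam ω : ℝ) : Matrix (Fin 2) (Fin 2) ℂ :=
  !![((-ω ^ 2 + ωR ^ 2 + lam : ℝ) : ℂ) + 2 * γ * ω * Complex.I, ((-lam : ℝ) : ℂ);
     ((-lam : ℝ) : ℂ), ((-ω ^ 2 + ωR ^ 2 + lam : ℝ) : ℂ) + 2 * γ * ω * Complex.I]

/-- The retarded propagator 𝔇̃(ω) of the two coupled damped oscillators. -/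
noncomputable def propD (γ ωR lam ω : ℝ) : Matrix (Fin 2) (Fin 2) ℂ :=
  (invProp γ ωR lam ω)⁻¹

/-! Each power term is an integral against `G̃_H(ω)_{kk}` of an entry of column `k` of `𝔇̃(ω)`,
so it suffices that the integrands cancel pointwise, column by column. Row `n` of
`(-ω² + 2iγω + Ω_R²) 𝔇̃ = 1` reads `a u - λ₂ v = δ_{nk}` with `u = 𝔇̃_{nk}`, `v = 𝔇̃_{νk}` and
`Im a = 2γω`; taking the imaginary part of its product with `ū` gives
`2γω |u|² + λ₂ Im(u v̄) + δ_{nk} Im u = 0`. Where the matrix is singular, Mathlib's inverse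
makes `𝔇̃ = 0` and every term vanishes. -/

theorem Complex.im_mul_sq_norm_sub_add_eq_zero {a u v : ℂ} {b c : ℝ}
    (h : a * u + b * v = c) :
    a.im * ‖u‖ ^ 2 - b * (u * (starRingEnd ℂ) v).im + c * u.im = 0 := by
  have him := congrArg Complex.im (congrArg ((starRingEnd ℂ) u * ·) h)
  simp only [mul_add, Complex.add_im, Complex.mul_im, Complex.mul_re, Complex.conj_re,
    Complex.conj_im, Complex.ofReal_re, Complex.ofReal_im] at him
  rw [Complex.sq_norm, Complex.normSq_apply]
  simp only [Complex.mul_im, Complex.conj_re, Complex.conj_im]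
  linear_combination him

theorem integral_add_sum_eq_zero {α ι : Type*} [MeasurableSpace α] {μ : Measure α}
    [Fintype ι] {f : α → ℝ} {g h : ι → α → ℝ} (a b : ℝ) (hf : Integrable f μ)
    (hg : ∀ k, Integrable (g k) μ) (hh : ∀ k, Integrable (h k) μ)
    (hzero : ∀ x, f x + ∑ k, (a * g k x + b * h k x) = 0) :
    ∫ x, f x ∂μ + a * ∑ k, ∫ x, g k x ∂μ + b * ∑ k, ∫ x, h k x ∂μ = 0 := by
  have hgh : ∀ k ∈ Finset.univ, Integrable (fun x => a * g k x + b * h k x) μ :=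
    fun k _ => ((hg k).const_mul a).add ((hh k).const_mul b)
  calc ∫ x, f x ∂μ + a * ∑ k, ∫ x, g k x ∂μ + b * ∑ k, ∫ x, h k x ∂μ
      = ∫ x, (f x + ∑ k, (a * g k x + b * h k x)) ∂μ := by
        rw [integral_add hf (integrable_finsetSum _ hgh), integral_finsetSum _ hgh,
          Finset.mul_sum, Finset.mul_sum, add_assoc, ← Finset.sum_add_distrib]
        congr 1
        refine Finset.sum_congr rfl fun k _ => ?_
        rw [integral_add ((hg k).const_mul a) ((hh k).const_mul b), integral_const_mul,
          integral_const_mul]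
    _ = 0 := by simp only [hzero, integral_zero]

theorem Fin.sum_univ_two_of_ne {M : Type*} [AddCommMonoid M] {i j : Fin 2} (hij : i ≠ j)
    (f : Fin 2 → M) : ∑ k, f k = f i + f j :=
  Fintype.sum_eq_add i j hij fun x hx => by omega

theorem invProp_apply_self (γ ωR lam ω : ℝ) (i : Fin 2) :
    invProp γ ωR lam ω i i = ((-ω ^ 2 + ωR ^ 2 + lam : ℝ) : ℂ) + 2 * γ * ω * Complex.I := by
  fin_cases i <;> rfl

theorem invProp_apply_of_ne (γ ωR lam ω : ℝ) {i j : Fin 2} (hij : i ≠ j) :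
    invProp γ ωR lam ω i j = ((-lam : ℝ) : ℂ) := by
  fin_cases i <;> fin_cases j <;> first | exact absurd rfl hij | rfl

theorem propD_column_balance (γ ωR lam ω : ℝ) {n ν : Fin 2} (hnν : n ≠ ν) (k : Fin 2) :
    ω * (1 : Matrix (Fin 2) (Fin 2) ℝ) n k * (propD γ ωR lam ω n k).im
      + 2 * γ * (ω ^ 2 * ‖propD γ ωR lam ω n k‖ ^ 2)
      + lam * (ω * (propD γ ωR lam ω n k * (starRingEnd ℂ) (propD γ ωR lam ω ν k)).im) = 0 := by
  by_cases hdet : IsUnit (invProp γ ωR lam ω).det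
  · have hrow : invProp γ ωR lam ω n n * propD γ ωR lam ω n k
        + ((-lam : ℝ) : ℂ) * propD γ ωR lam ω ν k = ((1 : Matrix (Fin 2) (Fin 2) ℝ) n k : ℝ) := by
      have hentry := congrFun (congrFun (Matrix.mul_nonsing_inv _ hdet) n) k
      rw [Matrix.mul_apply, Fin.sum_univ_two_of_ne hnν, invProp_apply_of_ne _ _ _ _ hnν,
        ← propD] at hentry
      rw [hentry, Matrix.one_apply, Matrix.one_apply]
      split_ifs <;> simp
    have him : (invProp γ ωR lam ω n n).im = 2 * γ * ω := by
      rw [invProp_apply_self, Complex.add_im, Complex.ofReal_im]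
      simp
    have hbalance := Complex.im_mul_sq_norm_sub_add_eq_zero hrow
    rw [him] at hbalance
    linear_combination ω * hbalance
  · simp [propD, Matrix.nonsing_inv_apply_not_isUnit _ hdet]

theorem propD_power_balance_pointwise (γ ωR lam : ℝ) (GH : ℝ → Fin 2 → ℝ) {n ν : Fin 2}
    (hnν : n ≠ ν) (ω : ℝ) :
    ω * (propD γ ωR lam ω n n).im * GH ω n
      + ∑ k, (2 * γ * (ω ^ 2 * ‖propD γ ωR lam ω n k‖ ^ 2 * GH ω k)
        + lam * (ω * (propD γ ωR lam ω n k * (starRingEnd ℂ) (propD γ ωR lam ω ν k)).im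
          * GH ω k)) = 0 := by
  have hdiag : ω * (propD γ ωR lam ω n n).im * GH ω n
      = ∑ k, ω * (1 : Matrix (Fin 2) (Fin 2) ℝ) n k * (propD γ ωR lam ω n k).im * GH ω k := by
    simp [Matrix.one_apply]
  rw [hdiag, ← Finset.sum_add_distrib]
  refine Finset.sum_eq_zero fun k _ => ?_
  linear_combination GH ω k * propD_column_balance γ ωR lam ω hnν k

theorem zeroth_order_power_balance_general (γ ωR lam : ℝ)
    (GH : ℝ → Fin 2 → ℝ)
    (n ν : Fin 2) (hnν : n ≠ ν)
    (hint1 : Integrable (fun ω : ℝ => ω * (propD γ ωR lam ω n n).im * GH ω n))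
    (hint2 : ∀ k : Fin 2,
      Integrable (fun ω : ℝ => ω ^ 2 * ‖propD γ ωR lam ω n k‖ ^ 2 * GH ω k))
    (hint3 : ∀ k : Fin 2,
      Integrable (fun ω : ℝ =>
        ω * (propD γ ωR lam ω n k * (starRingEnd ℂ) (propD γ ωR lam ω ν k)).im * GH ω k)) :
    (-(∫ ω : ℝ, ω * (propD γ ωR lam ω n n).im * GH ω n) / (2 * π)) +
        (-(2 * γ) * ∑ k : Fin 2,
          (∫ ω : ℝ, ω ^ 2 * ‖propD γ ωR lam ω n k‖ ^ 2 * GH ω k) / (2 * π)) +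
        (-lam * ∑ k : Fin 2,
          (∫ ω : ℝ,
            ω * (propD γ ωR lam ω n k * (starRingEnd ℂ) (propD γ ωR lam ω ν k)).im * GH ω k)
            / (2 * π)) = 0 := by
  have hbalance := integral_add_sum_eq_zero (2 * γ) lam hint1 hint2 hint3
    (propD_power_balance_pointwise γ ωR lam GH hnν)
  rw [← Finset.sum_div, ← Finset.sum_div]
  linear_combination (-1 / (2 * π)) * hbalance

/-- Zeroth-order power balance (NESS):
P_ξ^(0) + P_γ^(0) + P_{ν→n}^(0,2) = 0 for n = 1, 2 (ν = the other index), where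
P_ξ^(0) = -∫ (dω/2π) ω Im 𝔇̃_{nn} G̃_H(ω)_{nn},
P_γ^(0) = -2γ Σ_k ∫ (dω/2π) ω² |𝔇̃_{nk}|² G̃_H(ω)_{kk},
P_{ν→n}^(0,2) = -λ₂ Σ_k ∫ (dω/2π) ω Im(𝔇̃_{nk} 𝔇̃_{νk}*) G̃_H(ω)_{kk},
with G̃_H diagonal, real, even, and all integrands integrable. -/
theorem zeroth_order_power_balance (γ ωR lam : ℝ)
    (hγ : 0 < γ) (hωR : 0 < ωR) (hlam : 0 ≤ lam)
    (GH : ℝ → Fin 2 → ℝ)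
    (hGH_even : ∀ (ω : ℝ) (k : Fin 2), GH (-ω) k = GH ω k)
    (n ν : Fin 2) (hnν : n ≠ ν)
    (hint1 : Integrable (fun ω : ℝ => ω * (propD γ ωR lam ω n n).im * GH ω n))
    (hint2 : ∀ k : Fin 2,
      Integrable (fun ω : ℝ => ω ^ 2 * ‖propD γ ωR lam ω n k‖ ^ 2 * GH ω k))
    (hint3 : ∀ k : Fin 2,
      Integrable (fun ω : ℝ =>
        ω * (propD γ ωR lam ω n k * (starRingEnd ℂ) (propD γ ωR lam ω ν k)).im * GH ω k)) :
    (-(∫ ω : ℝ, ω * (propD γ ωR lam ω n n).im * GH ω n) / (2 * π)) +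
        (-(2 * γ) * ∑ k : Fin 2,
          (∫ ω : ℝ, ω ^ 2 * ‖propD γ ωR lam ω n k‖ ^ 2 * GH ω k) / (2 * π)) +
        (-lam * ∑ k : Fin 2,
          (∫ ω : ℝ,
            ω * (propD γ ωR lam ω n k * (starRingEnd ℂ) (propD γ ωR lam ω ν k)).im * GH ω k)
            / (2 * π)) = 0 :=
  zeroth_order_power_balance_general γ ωR lam GH n ν hnν hint1 hint2 hint3
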